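/- arXiv:2106.08598 — 2 statements merged into one kernel-verified Lean document; each statement's English description precedes it below -/
import Mathlib

section
/- Under the confidence-interval and local-variation assumptions, if the algorithm evaluates a point x := x_{h,i} satisfying (a) the index I_t(x) is at least the index of a cell containing the global maximizer x*, and (b) β_t σ̃_t(x) > V_h, then f(x*) - f(x) ≤ 3 β_t σ̃_t(x). -/
/-- Lemma (suboptimality of evaluated points, variance-dominated case):
if the evaluated point `x` has index at least `f(x*)` and `β σ̃(x) > V_h`,
then `f(x*) - f(x) ≤ 3 β σ̃(x)`. -/
theorem evaluated_point_suboptimality_variance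
    {X : Type*} (f μ σ : X → ℝ) (β Vh Vh1 : ℝ)
    (x xp xstar : X)
    (hconf : ∀ y, μ y - β * σ y ≤ f y ∧ f y ≤ μ y + β * σ y)
    (hindex : f xstar ≤ min (μ x + β * σ x) (μ xp + β * σ xp + Vh1) + Vh)
    (hvar : Vh < β * σ x) :
    f xstar - f x ≤ 3 * (β * σ x) := by
  have h1 := (hconf x).1
  have h2 : min (μ x + β * σ x) (μ xp + β * σ xp + Vh1) ≤ μ x + β * σ x := min_le_left _ _
  linarith
end

section
/- Under the same assumptions, if additionally the parent of the evaluated point satisfied the expansion condition β_t σ̃_t(x_{p(h,i)}) ≤ V_{h-1}, and V_{h-1} ≤ U_V V_h, then f(x*) - f(x_{h,i}) ≤ (4U_V + 1) V_h. -/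
/-- Lemma (suboptimality of evaluated points, expansion case): if moreover the
parent satisfied the expansion condition `β σ̃(x_p) ≤ V_{h-1}` and
`V_{h-1} ≤ U_V V_h`, then `f(x*) - f(x) ≤ (4U_V + 1) V_h`. -/
theorem evaluated_point_suboptimality_expansion
    {X : Type*} (f μ σ : X → ℝ) (β Vh Vh1 UV : ℝ)
    (x xp xstar : X)
    (hconf : ∀ y, μ y - β * σ y ≤ f y ∧ f y ≤ μ y + β * σ y)
    (hindex : f xstar ≤ min (μ x + β * σ x) (μ xp + β * σ xp + Vh1) + Vh)
    (hparent_var : f xp ≤ f x + Vh)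
    (hexp : β * σ xp ≤ Vh1)
    (hratio : Vh1 ≤ UV * Vh)
    (hVh : 0 ≤ Vh) (hUV : 1 ≤ UV) :
    f xstar - f x ≤ (4 * UV + 1) * Vh := by
  have h1 := (hconf xp).1
  have h2 : f xstar ≤ μ xp + β * σ xp + Vh1 + Vh := le_trans hindex (by
    have := min_le_right (μ x + β * σ x) (μ xp + β * σ xp + Vh1); linarith)
  nlinarith [mul_le_mul_of_nonneg_right (sub_nonneg.mpr hUV) hVh]
end
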